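/- arXiv:1708.09219 — 3 statements merged into one kernel-verified Lean document; each statement's English description precedes it below -/
import Mathlib

section
/- Let G be a finite group acting ℝ-linearly on ℝ^n via a representation ρ : G → GL(n,ℝ), extended ℂ-linearly to ℂ^n, and let σ denote coordinatewise complex conjugation on ℂ^n. If g ∈ G has odd order and p ∈ ℂ^n satisfies σ(p) = ρ(g)p, then p ∈ ℝ^n (i.e., p has real coordinates). -/
/-! Write `M` for the real matrix `ρ g`. Conjugating `σ p = M p` and using that `M` is real gives
`p = M (σ p) = M² p`. Since `M` has odd order `2t + 1`, it equals `(M²)^(t+1)`, so `M p = p` and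
hence `σ p = p`. -/

open ComplexConjugate

theorem sq_pow_half_succ_eq_self_of_pow_eq_one {M : Type*} [Monoid M] {a : M} {m : ℕ}
    (ha : a ^ m = 1) (hm : Odd m) : (a ^ 2) ^ ((m + 1) / 2) = a := by
  obtain ⟨t, rfl⟩ := hm
  rw [← pow_mul, show 2 * ((2 * t + 1 + 1) / 2) = 2 * t + 1 + 1 by omega, pow_succ, ha, one_mul]

namespace Matrix

section FixedVectors

variable {ι R : Type*} [Fintype ι] [DecidableEq ι] [Semiring R]

theorem pow_mulVec_eq_self {B : Matrix ι ι R} {v : ι → R} (hv : B *ᵥ v = v) (k : ℕ) :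
    (B ^ k) *ᵥ v = v := by
  induction k with
  | zero => rw [pow_zero, one_mulVec]
  | succ k ih => rw [pow_succ, ← mulVec_mulVec, hv, ih]

theorem mulVec_eq_self_of_sq_mulVec_eq_self {A : Matrix ι ι R} {v : ι → R} {m : ℕ}
    (hA : A ^ m = 1) (hm : Odd m) (hv : (A ^ 2) *ᵥ v = v) : A *ᵥ v = v := by
  simpa only [sq_pow_half_succ_eq_self_of_pow_eq_one hA hm] using
    pow_mulVec_eq_self hv ((m + 1) / 2)

end FixedVectors

section RealMatrix

variable {ι ι' : Type*} [Fintype ι']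

theorem conj_map_ofReal_mulVec (A : Matrix ι ι' ℝ) (v : ι' → ℂ) :
    (fun i => conj ((A.map Complex.ofReal *ᵥ v) i)) =
      A.map Complex.ofReal *ᵥ fun i => conj (v i) := by
  funext i
  rw [RingHom.map_mulVec]
  congr 1
  ext j k
  simp

theorem sq_map_ofReal_mulVec_eq_self [DecidableEq ι'] {A : Matrix ι' ι' ℝ} {v : ι' → ℂ}
    (hv : (fun i => conj (v i)) = A.map Complex.ofReal *ᵥ v) :
    (A.map Complex.ofReal ^ 2) *ᵥ v = v := by
  have hconj := congrArg (fun w : ι' → ℂ => fun i => conj (w i)) hv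
  simp only [Complex.conj_conj, conj_map_ofReal_mulVec] at hconj
  rw [sq, ← mulVec_mulVec, ← hv, ← hconj]

end RealMatrix

end Matrix

theorem stmt2_general (n : ℕ) (G : Type*) [Group G]
    (ρ : G →* Matrix.GeneralLinearGroup (Fin n) ℝ) (g : G)
    (hg : Odd (orderOf g)) (p : Fin n → ℂ)
    (hp : (fun i => (starRingEnd ℂ) (p i)) =
      ((ρ g : Matrix (Fin n) (Fin n) ℝ).map Complex.ofReal).mulVec p) :
    ∀ i, (p i).im = 0 := by
  set A := (ρ g : Matrix (Fin n) (Fin n) ℝ)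
  have hA : A.map Complex.ofReal ^ orderOf g = 1 := by
    change Complex.ofRealHom.mapMatrix A ^ _ = 1
    rw [← map_pow, ← Units.val_pow_eq_pow_val, ← map_pow, pow_orderOf_eq_one, map_one,
      Units.val_one, map_one]
  have hfix : (A.map Complex.ofReal).mulVec p = p :=
    Matrix.mulVec_eq_self_of_sq_mulVec_eq_self hA hg (Matrix.sq_map_ofReal_mulVec_eq_self hp)
  intro i
  exact Complex.conj_eq_iff_im.mp (congrFun (hp.trans hfix) i)

/-- Let a finite group `G` act ℝ-linearly on `ℝⁿ` via
`ρ : G → GL(n, ℝ)`, extended ℂ-linearly to `ℂⁿ`, and let `σ` be coordinatewise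
complex conjugation on `ℂⁿ`.  If `g ∈ G` has odd order and `p ∈ ℂⁿ` satisfies
`σ(p) = ρ(g) p`, then `p` has real coordinates. -/
theorem stmt2 (n : ℕ) (G : Type*) [Group G] [Finite G]
    (ρ : G →* Matrix.GeneralLinearGroup (Fin n) ℝ) (g : G)
    (hg : Odd (orderOf g)) (p : Fin n → ℂ)
    (hp : (fun i => (starRingEnd ℂ) (p i)) =
      ((ρ g : Matrix (Fin n) (Fin n) ℝ).map Complex.ofReal).mulVec p) :
    ∀ i, (p i).im = 0 :=
  stmt2_general n G ρ g hg p hp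
end

section
/- Let g : ℝ^n → ℝ^n be an orthogonal linear map (preserving the standard inner product), extended ℂ-bilinearly to g : ℂ^n → ℂ^n, and let σ : ℂ^n → ℂ^n denote coordinatewise complex conjugation. Let A : ℂ^n → ℂ^n be a map satisfying A(σ(z)) = σ(A(z)) and A(g(z)) = g(A(z)) for all z ∈ ℂ^n. Then for every p, w ∈ ℂ^n with σ(p) = g(p) and σ(w) = g(w), the value Σ_{i=1}^n A_i(p)·w_i is a real number. -/
open Matrix

theorem Matrix.mulVec_dotProduct_mulVec_of_transpose_mul_self {ι R : Type*} [Fintype ι]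
    [DecidableEq ι] [CommSemiring R] {M : Matrix ι ι R} (hM : Mᵀ * M = 1) (u v : ι → R) :
    M *ᵥ u ⬝ᵥ M *ᵥ v = u ⬝ᵥ v := by
  rw [dotProduct_mulVec, ← vecMul_transpose, vecMul_vecMul, hM, vecMul_one]

theorem isSelfAdjoint_dotProduct_of_star_eq_mulVec {ι R : Type*} [Fintype ι] [DecidableEq ι]
    [CommSemiring R] [StarRing R] {N : Matrix ι ι R} (hN : Nᵀ * N = 1) {A : (ι → R) → ι → R}
    (hA_star : ∀ z, A (star z) = star (A z)) (hA_mulVec : ∀ z, A (N *ᵥ z) = N *ᵥ A z)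
    {p w : ι → R} (hp : star p = N *ᵥ p) (hw : star w = N *ᵥ w) :
    IsSelfAdjoint (A p ⬝ᵥ w) :=
  calc star (A p ⬝ᵥ w)
      = star (A p) ⬝ᵥ star w := by rw [star_dotProduct_star, dotProduct_comm]
    _ = N *ᵥ A p ⬝ᵥ N *ᵥ w := by rw [← hA_star, hp, hA_mulVec, hw]
    _ = A p ⬝ᵥ w := mulVec_dotProduct_mulVec_of_transpose_mul_self hN _ _

/-- Let `g : ℝⁿ → ℝⁿ` be an orthogonal linear map (given by an
orthogonal matrix `M`), extended ℂ-bilinearly to `ℂⁿ`, and let `σ` denote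
coordinatewise complex conjugation.  Let `A : ℂⁿ → ℂⁿ` satisfy `A ∘ σ = σ ∘ A`
and `A ∘ g = g ∘ A`.  Then for all `p, w ∈ ℂⁿ` with `σ(p) = g(p)` and
`σ(w) = g(w)`, the value `Σᵢ Aᵢ(p)·wᵢ` is real. -/
theorem stmt3 (n : ℕ) (M : Matrix (Fin n) (Fin n) ℝ) (hM : M.transpose * M = 1)
    (A : (Fin n → ℂ) → (Fin n → ℂ))
    (hAσ : ∀ z : Fin n → ℂ,
      A (fun i => (starRingEnd ℂ) (z i)) = fun i => (starRingEnd ℂ) (A z i))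
    (hAg : ∀ z : Fin n → ℂ,
      A ((M.map Complex.ofReal).mulVec z) = (M.map Complex.ofReal).mulVec (A z))
    (p w : Fin n → ℂ)
    (hp : (fun i => (starRingEnd ℂ) (p i)) = (M.map Complex.ofReal).mulVec p)
    (hw : (fun i => (starRingEnd ℂ) (w i)) = (M.map Complex.ofReal).mulVec w) :
    (∑ i, A p i * w i).im = 0 := by
  have hN : (M.map Complex.ofReal)ᵀ * M.map Complex.ofReal = 1 := by
    have h := congrArg (·.map Complex.ofRealHom) hM
    rwa [Matrix.map_mul, transpose_map, Matrix.map_one _ (map_zero _) (map_one _)] at h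
  exact Complex.conj_eq_iff_im.mp
    (isSelfAdjoint_dotProduct_of_star_eq_mulVec hN hAσ hAg hp hw)
end

section
/- Fix n ≥ 1 and let G be a subgroup of the group {−1,1}^n, acting on the real polynomial ring ℝ[x_1,…,x_n] by (ε·φ)(x_1,…,x_n) = φ(ε_1 x_1,…,ε_n x_n). Let P be the linear span of the monomials x^k = x_1^{k_1}⋯x_n^{k_n} with 0 ≤ k_i ≤ 2 for all i, and let W = { φ ∈ P : ε·φ = (∏_{i=1}^n ε_i)·φ for all ε ∈ G }. Define the symmetric bilinear form B on P by B(φ,ψ) := the coefficient of the monomial x_1²⋯x_n² in the product φψ. Then the restriction of B to W is nondegenerate and has signature 1; that is, dim W is odd, say dim W = 2m+1, and the quadratic form φ ↦ B(φ,φ) on W is equivalent over ℝ to a diagonal form with m+1 entries equal to +1 and m entries equal to −1. -/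
/-- The span of the monomials `x^k`, `0 ≤ kᵢ ≤ 2`, in `ℝ[x₁,…,xₙ]`, identified
with the space of coefficient functions `(Fin n → Fin 3) → ℝ`.  `W n G` is the
subspace of those `φ` with `ε·φ = (∏ᵢ εᵢ)·φ` for all `ε ∈ G ≤ {±1}ⁿ`, where
`(ε·φ)(x₁,…,xₙ) = φ(ε₁x₁,…,εₙxₙ)`, i.e. the coefficient of `x^k` in `ε·φ` is
`(∏ᵢ εᵢ^{kᵢ})·φ_k`. -/
def W10 (n : ℕ) (G : Subgroup (Fin n → ℤˣ)) :
    Submodule ℝ ((Fin n → Fin 3) → ℝ) where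
  carrier := {c | ∀ ε ∈ G, ∀ k : Fin n → Fin 3,
    (∏ i, ((ε i : ℤ) : ℝ) ^ (k i : ℕ)) * c k = (∏ i, ((ε i : ℤ) : ℝ)) * c k}
  add_mem' := by
    intro a b ha hb ε hε k
    simp only [Pi.add_apply, mul_add, ha ε hε k, hb ε hε k]
  zero_mem' := by
    intro ε hε k
    simp
  smul_mem' := by
    intro r a ha ε hε k
    simp only [Pi.smul_apply, smul_eq_mul]
    rw [mul_left_comm, ha ε hε k, mul_left_comm]

/-- The symmetric bilinear form `B(φ,ψ) :=` coefficient of `x₁²⋯xₙ²` in `φψ`: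
in coefficients, `B(φ,ψ) = Σ_k φ_k · ψ_{2-k}`. -/
def B10 (n : ℕ) (c d : (Fin n → Fin 3) → ℝ) : ℝ :=
  ∑ k : Fin n → Fin 3, c k * d fun i => (⟨2 - (k i : ℕ), by omega⟩ : Fin 3)

/-!
Every monomial `x^k` is an eigenvector of the sign action, with character `ε ↦ ∏ εᵢ^{kᵢ}`, so `W`
consists of the coefficient vectors supported on the set `s` of exponents whose character is
`ε ↦ ∏ εᵢ`. As `εᵢ² = 1`, `s` is stable under the involution `σ : k ↦ 2 - k`, and `B` pairs `x^k`
with `x^{σ k}`. The only fixed point of `σ` is `(1, …, 1)`, which lies in `s`; the other points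
of `s` fall into pairs `{k, σ k}`, each spanning a hyperbolic plane for `B` with orthogonal basis
`(x^k ± x^{σ k}) / √2` of norms `±1`. So `B` on `W` is `⟨1⟩ ⊕ Hᵐ`, nondegenerate of signature `1`.
-/

open Function Finset

section Hyperbolic

variable (M : Type*) [AddCommGroup M] [Module ℝ M]

noncomputable def hyperbolicRotation : (M × M) ≃ₗ[ℝ] M × M :=
  LinearEquiv.ofInvolutive ((√2)⁻¹ • ((LinearMap.fst ℝ M M + LinearMap.snd ℝ M M).prod
      (LinearMap.fst ℝ M M - LinearMap.snd ℝ M M))) fun ⟨x, y⟩ => by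
    have h : (√2)⁻¹ * (√2)⁻¹ = (2 : ℝ)⁻¹ := by rw [← mul_inv, Real.mul_self_sqrt zero_le_two]
    change ((√2)⁻¹ • ((√2)⁻¹ • (x + y) + (√2)⁻¹ • (x - y)),
      (√2)⁻¹ • ((√2)⁻¹ • (x + y) - (√2)⁻¹ • (x - y))) = (x, y)
    rw [← smul_add, ← smul_sub, smul_smul, smul_smul, h, add_add_sub_cancel, add_sub_sub_cancel]
    ext <;> module

theorem two_mul_eq_sq_sub_sq (x y : ℝ) :
    2 * (x * y) = ((√2)⁻¹ * (x + y)) ^ 2 - ((√2)⁻¹ * (x - y)) ^ 2 := by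
  rw [mul_pow, mul_pow, inv_pow, Real.sq_sqrt zero_le_two]
  ring

variable (κ : Type*) [Fintype κ]

noncomputable def hyperbolicDiagonalization :
    (ℝ × (κ → ℝ) × (κ → ℝ)) ≃ₗ[ℝ]
      (Fin (Fintype.card κ + 1) → ℝ) × (Fin (Fintype.card κ) → ℝ) :=
  let reindex := LinearEquiv.funCongrLeft ℝ ℝ (Fintype.equivFin κ).symm
  (LinearEquiv.prodCongr (LinearEquiv.refl ℝ ℝ) (hyperbolicRotation (κ → ℝ))).trans <|
    (LinearEquiv.prodAssoc ℝ ℝ (κ → ℝ) (κ → ℝ)).symm.trans <|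
      LinearEquiv.prodCongr
        ((LinearEquiv.prodCongr (LinearEquiv.refl ℝ ℝ) reindex).trans
          (Fin.consLinearEquiv ℝ fun _ : Fin (Fintype.card κ + 1) => ℝ)) reindex

theorem hyperbolicDiagonalization_apply (a : ℝ) (x y : κ → ℝ) :
    hyperbolicDiagonalization κ (a, x, y) =
      (Fin.cons a fun i => (√2)⁻¹ * (x ((Fintype.equivFin κ).symm i) +
          y ((Fintype.equivFin κ).symm i)),
        fun i => (√2)⁻¹ * (x ((Fintype.equivFin κ).symm i) -
          y ((Fintype.equivFin κ).symm i))) :=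
  rfl

theorem sq_add_two_mul_sum_eq (a : ℝ) (x y : κ → ℝ) :
    a ^ 2 + 2 * ∑ k, x k * y k =
      (∑ i, (hyperbolicDiagonalization κ (a, x, y)).1 i ^ 2) -
        ∑ i, (hyperbolicDiagonalization κ (a, x, y)).2 i ^ 2 := by
  simp only [hyperbolicDiagonalization_apply, Fin.sum_univ_succ, Fin.cons_zero, Fin.cons_succ,
    add_sub_assoc, ← sum_sub_distrib, mul_sum, two_mul_eq_sq_sub_sq]
  rw [← (Fintype.equivFin κ).symm.sum_comp]

end Hyperbolic

section OrbitSplitting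

variable {ι : Type*} {σ : ι → ι} {s : Set ι} {o : ι} {P : Finset ι}

/-- For an involution `σ`: `o` is the only fixed point of `σ` in `s`, and `P` contains exactly
one point of each other `σ`-orbit in `s`. -/
structure IsOrbitSplitting (σ : ι → ι) (s : Set ι) (o : ι) (P : Finset ι) : Prop where
  map_self : σ o = o
  mem_iff : ∀ k, k ∈ s ↔ k = o ∨ k ∈ P ∨ σ k ∈ P
  map_notMem : ∀ k ∈ P, σ k ∉ P

theorem exists_isOrbitSplitting [Fintype ι] (hσ : Involutive σ) (hs : ∀ k ∈ s, σ k ∈ s) (ho : o ∈ s)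
    (hfix : ∀ k ∈ s, σ k = k ↔ k = o) : ∃ P, IsOrbitSplitting σ s o P := by
  classical
  let F := Fintype.equivFin ι
  refine ⟨univ.filter fun k => k ∈ s ∧ F k < F (σ k), (hfix o ho).2 rfl, fun k => ?_,
    fun k hk hσk => ?_⟩
  · simp only [mem_filter, mem_univ, true_and, hσ k]
    constructor
    · intro hk
      by_cases hko : k = o
      · exact .inl hko
      have hne : F k ≠ F (σ k) := fun h => hko ((hfix k hk).1 (F.injective h).symm)
      rcases hne.lt_or_gt with hlt | hgt
      · exact .inr (.inl ⟨hk, hlt⟩)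
      · exact .inr (.inr ⟨hs k hk, hgt⟩)
    · rintro (rfl | ⟨hk, -⟩ | ⟨hk, -⟩)
      · exact ho
      · exact hk
      · simpa only [hσ k] using hs _ hk
  · simp only [mem_filter, mem_univ, true_and, hσ k] at hk hσk
    exact lt_asymm hk.2 hσk.2

namespace IsOrbitSplitting

theorem notMem (hP : IsOrbitSplitting σ s o P) : o ∉ P := fun h =>
  hP.map_notMem o h (by rwa [hP.map_self])

theorem map_ne (hσ : Involutive σ) (hP : IsOrbitSplitting σ s o P) {k : ι} (hk : k ∈ P) :
    σ k ≠ o := fun h => hP.notMem (by rwa [← hσ k, h, hP.map_self] at hk)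

theorem sum_eq_add_sum [Fintype ι] {M : Type*} [AddCommMonoid M] (hσ : Involutive σ)
    (hP : IsOrbitSplitting σ s o P) (f : ι → M) (hf : ∀ k ∉ s, f k = 0) : ∑ k, f k = f o + ∑ k ∈ P, (f k + f (σ k)) := by
  classical
  have ho : o ∉ P ∪ P.image σ := by
    simp only [mem_union, mem_image, not_or, not_exists, not_and]
    exact ⟨hP.notMem, fun k hk => hP.map_ne hσ hk⟩
  have hdisj : Disjoint P (P.image σ) := by
    simp only [disjoint_left, mem_image, not_exists, not_and]
    rintro _ hk l hl rfl
    exact hP.map_notMem l hl hk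
  rw [← sum_subset (subset_univ (insert o (P ∪ P.image σ))), sum_insert ho,
    sum_union hdisj, sum_image (hσ.injective.injOn), sum_add_distrib]
  intro k _ hk
  refine hf k fun hks => hk ?_
  rcases (hP.mem_iff k).1 hks with rfl | hkP | hσkP
  · exact mem_insert_self _ _
  · exact mem_insert_of_mem (mem_union_left _ hkP)
  · exact mem_insert_of_mem (mem_union_right _ (mem_image.2 ⟨σ k, hσkP, hσ k⟩))

theorem sum_mul_map_eq [Fintype ι] {R : Type*} [CommSemiring R] (hσ : Involutive σ)
    (hP : IsOrbitSplitting σ s o P) {c : ι → R} (hc : ∀ k ∉ s, c k = 0) :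
    ∑ k, c k * c (σ k) = c o ^ 2 + 2 * ∑ k ∈ P, c k * c (σ k) := by
  rw [hP.sum_eq_add_sum hσ _ fun k hk => by rw [hc k hk, zero_mul], hP.map_self, sq, mul_sum]
  congr 1
  refine sum_congr rfl fun k _ => ?_
  rw [hσ k]
  ring

end IsOrbitSplitting

section Extend

variable [DecidableEq ι] {M : Type*} [Zero M]

variable (σ o P) in
def orbitExtend (a : M) (x y : P → M) (k : ι) : M :=
  if k = o then a else if h : k ∈ P then x ⟨k, h⟩ else if h : σ k ∈ P then y ⟨σ k, h⟩ else 0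

theorem orbitExtend_self (a : M) (x y : P → M) : orbitExtend σ o P a x y o = a :=
  if_pos rfl

theorem IsOrbitSplitting.orbitExtend_of_mem (hP : IsOrbitSplitting σ s o P) (a : M) (x y : P → M)
    {k : ι} (hk : k ∈ P) : orbitExtend σ o P a x y k = x ⟨k, hk⟩ := by
  rw [orbitExtend, if_neg (ne_of_mem_of_not_mem hk hP.notMem), dif_pos hk]

theorem IsOrbitSplitting.orbitExtend_map_of_mem (hσ : Involutive σ)
    (hP : IsOrbitSplitting σ s o P) (a : M) (x y : P → M) {k : ι} (hk : k ∈ P) : orbitExtend σ o P a x y (σ k) = y ⟨k, hk⟩ := by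
  have hk' : σ (σ k) ∈ P := by rwa [hσ k]
  rw [orbitExtend, if_neg (hP.map_ne hσ hk), dif_neg (hP.map_notMem k hk), dif_pos hk']
  simp only [hσ k]

theorem IsOrbitSplitting.orbitExtend_of_notMem (hP : IsOrbitSplitting σ s o P) (a : M)
    (x y : P → M) {k : ι} (hk : k ∉ s) : orbitExtend σ o P a x y k = 0 := by
  simp only [hP.mem_iff, not_or] at hk
  rw [orbitExtend, if_neg hk.1, dif_neg hk.2.1, dif_neg hk.2.2]

theorem IsOrbitSplitting.orbitExtend_eq (hσ : Involutive σ) (hP : IsOrbitSplitting σ s o P)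
    {c : ι → M} (hc : ∀ k ∉ s, c k = 0) :
    orbitExtend σ o P (c o) (fun k => c k) (fun k => c (σ k)) = c := by
  ext k
  by_cases hks : k ∈ s
  · rcases (hP.mem_iff k).1 hks with rfl | hk | hk
    · exact orbitExtend_self _ _ _
    · exact hP.orbitExtend_of_mem _ _ _ hk
    · simpa only [hσ k] using
        hP.orbitExtend_map_of_mem hσ (c o) (fun k => c k) (fun k => c (σ k)) hk
  · rw [hP.orbitExtend_of_notMem _ _ _ hks, hc k hks]

end Extend

def IsOrbitSplitting.coordEquiv (R : Type*) {M : Type*} [Semiring R] [AddCommMonoid M]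
    [Module R M] [DecidableEq ι] (hσ : Involutive σ) (hP : IsOrbitSplitting σ s o P) :
    Submodule.pi sᶜ (fun _ => (⊥ : Submodule R M)) ≃ₗ[R] M × (P → M) × (P → M) where
  toFun c := (c.1 o, fun k => c.1 k, fun k => c.1 (σ k))
  map_add' _ _ := rfl
  map_smul' _ _ := rfl
  invFun := fun ⟨a, x, y⟩ => ⟨orbitExtend σ o P a x y, Submodule.mem_pi.2 fun k hk =>
    (Submodule.mem_bot R).2 (hP.orbitExtend_of_notMem a x y hk)⟩
  left_inv c := Subtype.ext <| hP.orbitExtend_eq hσ fun k hk =>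
    (Submodule.mem_bot R).1 (Submodule.mem_pi.1 c.2 k hk)
  right_inv := fun ⟨a, x, y⟩ => by
    ext k
    · exact orbitExtend_self a x y
    · exact hP.orbitExtend_of_mem a x y k.2
    · exact hP.orbitExtend_map_of_mem hσ a x y k.2

end OrbitSplitting

section Signature

variable {ι : Type*} [Fintype ι] {σ : ι → ι} {s : Set ι}

theorem eq_zero_of_forall_sum_mul_map_eq_zero {R : Type*} [Semiring R] (hσ : Involutive σ)
    (hs : ∀ k ∈ s, σ k ∈ s) {c : ι → R} (hc : c ∈ Submodule.pi sᶜ fun _ => (⊥ : Submodule R R))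
    (h : ∀ d ∈ Submodule.pi sᶜ (fun _ => (⊥ : Submodule R R)), ∑ k, c k * d (σ k) = 0) :
    c = 0 := by
  classical
  ext k
  by_cases hk : k ∈ s
  · have hsingle : Pi.single (σ k) 1 ∈ Submodule.pi sᶜ fun _ => (⊥ : Submodule R R) :=
      Submodule.mem_pi.2 fun l hl => (Submodule.mem_bot R).2 <|
        Pi.single_eq_of_ne (by rintro rfl; exact hl (hs k hk)) _
    simpa [Pi.single_apply, hσ.injective.eq_iff] using h _ hsingle
  · exact (Submodule.mem_bot R).1 (Submodule.mem_pi.1 hc k hk)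

theorem exists_linearEquiv_sum_mul_map_eq (hσ : Involutive σ) (hs : ∀ k ∈ s, σ k ∈ s) {o : ι}
    (ho : o ∈ s) (hfix : ∀ k ∈ s, σ k = k ↔ k = o) :
    ∃ (m : ℕ) (e : Submodule.pi sᶜ (fun _ => (⊥ : Submodule ℝ ℝ)) ≃ₗ[ℝ]
      (Fin (m + 1) → ℝ) × (Fin m → ℝ)),
        ∀ c : Submodule.pi sᶜ (fun _ => (⊥ : Submodule ℝ ℝ)),
          ∑ k, (c : ι → ℝ) k * (c : ι → ℝ) (σ k) =
          (∑ i, (e c).1 i ^ 2) - ∑ i, (e c).2 i ^ 2 := by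
  classical
  obtain ⟨P, hP⟩ := exists_isOrbitSplitting hσ hs ho hfix
  refine ⟨Fintype.card P, (hP.coordEquiv ℝ hσ).trans (hyperbolicDiagonalization P), fun c => ?_⟩
  rw [hP.sum_mul_map_eq hσ fun k hk => (Submodule.mem_bot ℝ).1 (Submodule.mem_pi.1 c.2 k hk),
    ← sum_coe_sort P]
  exact sq_add_two_mul_sum_eq P _ _ _

end Signature

theorem Fin.rev_comp_involutive (α : Type*) (m : ℕ) : Involutive fun k : α → Fin m => Fin.rev ∘ k :=
  fun k => funext fun i => Fin.rev_rev (k i)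

theorem Fin.rev_comp_eq_self_iff {α : Type*} (k : α → Fin 3) :
    Fin.rev ∘ k = k ↔ k = fun _ => 1 := by
  have h : ∀ j : Fin 3, j.rev = j ↔ j = 1 := by decide
  simp only [funext_iff, comp_apply, h]

theorem Int.cast_units_pow_rev (u : ℤˣ) (j : Fin 3) :
    ((u : ℤ) : ℝ) ^ (j.rev : ℕ) = ((u : ℤ) : ℝ) ^ (j : ℕ) := by
  rcases Int.units_eq_one_or u with rfl | rfl <;> fin_cases j <;> norm_num

theorem B10_eq_sum_rev (n : ℕ) (c d : (Fin n → Fin 3) → ℝ) :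
    B10 n c d = ∑ k, c k * d (Fin.rev ∘ k) := by
  refine sum_congr rfl fun k _ => ?_
  congr 2
  ext i : 2
  simp only [comp_apply, Fin.val_rev]
  omega

def allowedExponents (n : ℕ) (G : Subgroup (Fin n → ℤˣ)) : Set (Fin n → Fin 3) :=
  {k | ∀ ε ∈ G, ∏ i, ((ε i : ℤ) : ℝ) ^ (k i : ℕ) = ∏ i, ((ε i : ℤ) : ℝ)}

theorem W10_eq_pi (n : ℕ) (G : Subgroup (Fin n → ℤˣ)) :
    W10 n G = Submodule.pi (allowedExponents n G)ᶜ fun _ => ⊥ := by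
  ext c
  simp only [W10, allowedExponents, Submodule.mem_mk, AddSubmonoid.mem_mk, AddSubsemigroup.mem_mk,
    Set.mem_ofPred_eq, Submodule.mem_pi, Set.mem_compl_iff, Submodule.mem_bot]
  constructor
  · intro h k hk
    obtain ⟨ε, hε, hne⟩ := not_forall₂.1 hk
    by_contra hc
    exact hne (mul_right_cancel₀ hc (h ε hε k))
  · intro h ε hε k
    by_cases hk : ∀ ε ∈ G, ∏ i, ((ε i : ℤ) : ℝ) ^ (k i : ℕ) = ∏ i, ((ε i : ℤ) : ℝ)
    · rw [hk ε hε]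
    · rw [h k hk, mul_zero, mul_zero]

theorem rev_comp_mem_allowedExponents {n : ℕ} {G : Subgroup (Fin n → ℤˣ)} {k : Fin n → Fin 3}
    (hk : k ∈ allowedExponents n G) : Fin.rev ∘ k ∈ allowedExponents n G := fun ε hε => by
  simpa only [comp_apply, Int.cast_units_pow_rev] using hk ε hε

theorem const_one_mem_allowedExponents (n : ℕ) (G : Subgroup (Fin n → ℤˣ)) :
    (fun _ => 1) ∈ allowedExponents n G := fun ε _ => by
  simp only [Fin.val_one, pow_one]

theorem stmt10_general (n : ℕ) (G : Subgroup (Fin n → ℤˣ)) :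
    (∀ x ∈ W10 n G, (∀ y ∈ W10 n G, B10 n x y = 0) → x = 0) ∧
      ∃ (m : ℕ) (e : W10 n G ≃ₗ[ℝ] (Fin (m + 1) → ℝ) × (Fin m → ℝ)),
        Module.finrank ℝ (W10 n G) = 2 * m + 1 ∧
          ∀ x : W10 n G,
            B10 n x x = (∑ i, (e x).1 i ^ 2) - ∑ i, (e x).2 i ^ 2 := by
  have hσ := Fin.rev_comp_involutive (Fin n) 3
  have hs : ∀ k ∈ allowedExponents n G, Fin.rev ∘ k ∈ allowedExponents n G :=
    fun _ => rev_comp_mem_allowedExponents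
  rw [W10_eq_pi]
  simp only [B10_eq_sum_rev]
  obtain ⟨m, e, he⟩ := exists_linearEquiv_sum_mul_map_eq hσ hs
    (const_one_mem_allowedExponents n G) fun k _ => Fin.rev_comp_eq_self_iff k
  refine ⟨fun c hc h => eq_zero_of_forall_sum_mul_map_eq_zero hσ hs hc h, m, e, ?_, he⟩
  rw [e.finrank_eq, Module.finrank_prod, Module.finrank_fin_fun, Module.finrank_fin_fun]
  ring

/-- Fix `n ≥ 1` and a subgroup `G ≤ {−1,1}ⁿ` acting on
`ℝ[x₁,…,xₙ]` by sign changes of the variables.  On the span `P` of the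
monomials `x^k` with `0 ≤ kᵢ ≤ 2` consider
`W = {φ ∈ P : ε·φ = (∏ εᵢ)·φ for all ε ∈ G}` and the symmetric bilinear form
`B(φ,ψ) :=` coefficient of `x₁²⋯xₙ²` in `φψ`.  Then `B` restricted to `W` is
nondegenerate of signature `1`: `dim W = 2m + 1` is odd, and the quadratic
form `φ ↦ B(φ,φ)` on `W` is equivalent over ℝ to a diagonal form with `m + 1`
entries `+1` and `m` entries `−1`. -/
theorem stmt10 (n : ℕ) (hn : 1 ≤ n) (G : Subgroup (Fin n → ℤˣ)) :
    (∀ x ∈ W10 n G, (∀ y ∈ W10 n G, B10 n x y = 0) → x = 0) ∧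
      ∃ (m : ℕ) (e : W10 n G ≃ₗ[ℝ] (Fin (m + 1) → ℝ) × (Fin m → ℝ)),
        Module.finrank ℝ (W10 n G) = 2 * m + 1 ∧
          ∀ x : W10 n G,
            B10 n x x = (∑ i, (e x).1 i ^ 2) - ∑ i, (e x).2 i ^ 2 :=
  stmt10_general n G
end
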